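/- Let μ^(0),...,μ^(N) be partitions with |μ^(k)| = |μ^(0)| + k such that every partition μ of size |μ^(0)| + k appearing with nonzero coefficient in the Schur expansion of the degree-(|μ^(0)|+k) component satisfies μ ≤_D μ^(k), and μ^(k) itself appears. Then the Newton polytope of that homogeneous component equals the permutahedron P_{μ^(k)}, and the component has saturated Newton polytope. -/

import Mathlib

open Finset

/-- Sum of the first `t` coordinates of a vector. -/
def psum {n : ℕ} (v : Fin n → ℝ) (t : ℕ) : ℝ := ∑ i : Fin n, if (i : ℕ) < t then v i else 0

/-- Sum of the first `t` coordinates of a vector of naturals. -/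
def npsum {n : ℕ} (v : Fin n → ℕ) (t : ℕ) : ℕ := ∑ i : Fin n, if (i : ℕ) < t then v i else 0

/-- The decreasing rearrangement `v↓` of a vector. -/
noncomputable def decSort {n : ℕ} (v : Fin n → ℝ) : Fin n → ℝ := fun i => v (Tuple.sort v i.rev)

/-- `Majorizes w v` : `v` is majorized by `w`. -/
def Majorizes {n : ℕ} (w v : Fin n → ℝ) : Prop :=
  (∀ t, psum (decSort v) t ≤ psum (decSort w) t) ∧ ∑ i, v i = ∑ i, w i

/-- The permutahedron of `v`: convex hull of the orbit of `v` under coordinate permutations. -/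
noncomputable def permutahedron {n : ℕ} (v : Fin n → ℝ) : Set (Fin n → ℝ) :=
  convexHull ℝ {w | ∃ σ : Equiv.Perm (Fin n), w = v ∘ σ}

/-- Row `ρ` (0-indexed; 1-indexed row `ρ+1`) can receive a box: the current excess over `lam`
is `< (ρ+1) - 1 = ρ` and adding a box keeps the shape a partition. -/
def AddableRow {n : ℕ} (lam mu : Fin n → ℕ) (ρ : Fin n) : Prop :=
  mu ρ < lam ρ + (ρ : ℕ) ∧ Antitone (Function.update mu ρ (mu ρ + 1))

/-- One step of the northmost-box-adding construction relative to the base partition `lam`. -/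
def NorthStep {n : ℕ} (lam muprev munext : Fin n → ℕ) : Prop :=
  ∃ ρ : Fin n, AddableRow lam muprev ρ ∧ (∀ ρ' : Fin n, ρ' < ρ → ¬ AddableRow lam muprev ρ') ∧
    munext = Function.update muprev ρ (muprev ρ + 1)

/-- A row- and column-strictly increasing skew tableau of shape `mu/lam` whose entries in
(1-indexed) row `r+1` lie in `{1, ..., r}`, i.e. are at most `(r+1) - 1`. -/
def IsFlaggedTableau {n : ℕ} (lam mu : Fin n → ℕ) (T : Fin n → ℕ → ℕ) : Prop :=
  (∀ i, lam i ≤ mu i) ∧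
  (∀ r : Fin n, ∀ c, lam r ≤ c → c < mu r → 1 ≤ T r c ∧ T r c ≤ (r : ℕ)) ∧
  (∀ r : Fin n, ∀ c c', lam r ≤ c → c < c' → c' < mu r → T r c < T r c') ∧
  (∀ r r' : Fin n, r < r' → ∀ c, lam r ≤ c → c < mu r → lam r' ≤ c → c < mu r' → T r c < T r' c)

/-- The number of flagged tableaux of shape `mu/lam` (tableaux normalized to vanish off the shape). -/
noncomputable def flaggedCount {n : ℕ} (lam mu : Fin n → ℕ) : ℕ :=
  Set.ncard {T : Fin n → ℕ → ℕ | IsFlaggedTableau lam mu T ∧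
    ∀ (r : Fin n) (c : ℕ), (c < lam r ∨ mu r ≤ c) → T r c = 0}

/-- The coefficient `a_{lam,mu}` in the Schur expansion of the symmetric Grothendieck polynomial. -/
noncomputable def grothCoeff {n : ℕ} (lam mu : Fin n → ℕ) : ℝ :=
  if Antitone mu ∧ ∀ i, lam i ≤ mu i then
    (-1 : ℝ) ^ (∑ i, mu i - ∑ i, lam i) * flaggedCount lam mu
  else 0

/-- A semistandard Young tableau of shape `lam` with entries in `{1, ..., n}`. -/
def IsSSYT {n : ℕ} (lam : Fin n → ℕ) (T : Fin n → ℕ → ℕ) : Prop :=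
  (∀ r : Fin n, ∀ c, c < lam r → 1 ≤ T r c ∧ T r c ≤ n) ∧
  (∀ r : Fin n, ∀ c c', c ≤ c' → c' < lam r → T r c ≤ T r c') ∧
  (∀ r r' : Fin n, r < r' → ∀ c, c < lam r' → c < lam r → T r c < T r' c)

/-- The Kostka number `K_{lam,α}`: the number of SSYT of shape `lam` and weight `α`. -/
noncomputable def kostka {n : ℕ} (lam : Fin n → ℕ) (α : Fin n →₀ ℕ) : ℕ :=
  Set.ncard {T : Fin n → ℕ → ℕ | IsSSYT lam T ∧ (∀ (r : Fin n) (c : ℕ), lam r ≤ c → T r c = 0) ∧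
    ∀ i : Fin n, α i = Set.ncard {p : Fin n × ℕ | p.2 < lam p.1 ∧ T p.1 p.2 = (i : ℕ) + 1}}

/-- The Schur polynomial `s_lam(x_1, ..., x_n)`, as the generating polynomial of SSYT. -/
noncomputable def schur {n : ℕ} (lam : Fin n → ℕ) : MvPolynomial (Fin n) ℝ :=
  ∑ α ∈ Finset.Iic (Finsupp.equivFunOnFinite.symm (fun _ : Fin n => ∑ i, lam i)),
    (kostka lam α : ℝ) • MvPolynomial.monomial α 1

/-- The symmetric Grothendieck polynomial `G_lam(x_1, ..., x_n) = ∑_mu a_{lam,mu} s_mu`. -/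
noncomputable def grothendieck {n : ℕ} (lam : Fin n → ℕ) : MvPolynomial (Fin n) ℝ :=
  ∑ m ∈ Finset.Iic (Finsupp.equivFunOnFinite.symm (fun i : Fin n => lam i + (i : ℕ))),
    grothCoeff lam (fun i => m i) • schur (fun i => m i)

/-- The Newton polytope of a polynomial: convex hull of its exponent vectors. -/
noncomputable def newton {n : ℕ} (f : MvPolynomial (Fin n) ℝ) : Set (Fin n → ℝ) :=
  convexHull ℝ ((fun α : Fin n →₀ ℕ => fun i => (α i : ℝ)) '' (f.support : Set (Fin n →₀ ℕ)))

/-- A polynomial has saturated Newton polytope (SNP) if every lattice point of its Newton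
polytope is an exponent vector with nonzero coefficient. -/
def SNP {n : ℕ} (f : MvPolynomial (Fin n) ℝ) : Prop :=
  ∀ α : Fin n →₀ ℕ, (fun i => (α i : ℝ)) ∈ newton f → MvPolynomial.coeff α f ≠ 0

/-!
The coefficient of `x^β` in `G_lam` is `∑_μ a_{lam,μ} K_{μ,β}`, and every nonzero term has the
sign `(-1)^(|β| - |lam|)`, so nothing cancels: `β` lies in the support of the degree-`|lam| + k`
component iff `|β| = |lam| + k` and `K_{μ,β} ≠ 0` for some `μ` with `a_{lam,μ} ≠ 0`. A Kostka
number `K_{μ,β}` is nonzero iff `β` is dominated by `μ` (strict columns give one direction;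
peeling off the largest entry as a horizontal strip gives the other). By maximality of `μ*` the
support is therefore exactly the set of weights dominated by `μ*`, which by Rado's theorem
(a separating hyperplane plus Abel summation) are the lattice points of `P_{μ*}`. The vertices
of `P_{μ*}` are among them, so the Newton polytope is `P_{μ*}` and it is saturated.
-/

section Permutahedron

variable {n : ℕ}

lemma sum_ite_lt_succ {M : Type*} [AddCommMonoid M] (w : Fin n → M) {t : ℕ} (ht : t < n) :
    ∑ i : Fin n, (if (i : ℕ) < t + 1 then w i else 0)
      = ∑ i : Fin n, (if (i : ℕ) < t then w i else 0) + w ⟨t, ht⟩ := by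
  rw [← Fintype.sum_ite_eq' (⟨t, ht⟩ : Fin n) w, ← sum_add_distrib]
  refine sum_congr rfl fun i _ => ?_
  have := @Fin.ext_iff _ i ⟨t, ht⟩
  split_ifs <;> simp_all <;> omega

lemma sum_le_sum_ite_lt_card {M : Type*} [AddCommMonoid M] [PartialOrder M]
    [IsOrderedAddMonoid M] {w : Fin n → M} (hw : Antitone w) (S : Finset (Fin n)) :
    ∑ i ∈ S, w i ≤ ∑ i : Fin n, (if (i : ℕ) < #S then w i else 0) := by
  induction S using Finset.induction_on_max with
  | empty => simp
  | insert a s hlt ih =>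
    have has : a ∉ s := fun h => lt_irrefl a (hlt a h)
    have hcard : #s ≤ a := by
      simpa using card_le_card (fun x hx => mem_Iio.2 (hlt x hx) : s ⊆ Iio a)
    rw [sum_insert has, card_insert_of_notMem has, sum_ite_lt_succ w (hcard.trans_lt a.2),
      add_comm]
    exact add_le_add ih (hw (Fin.le_def.2 hcard))

lemma isLinearMap_sum_apply (S : Finset (Fin n)) :
    IsLinearMap ℝ fun x : Fin n → ℝ => ∑ i ∈ S, x i :=
  ⟨fun x y => sum_add_distrib, fun c x => by simp [mul_sum]⟩

theorem sum_le_psum_of_mem_permutahedron {w x : Fin n → ℝ} (hw : Antitone w)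
    (hx : x ∈ permutahedron w) (S : Finset (Fin n)) : ∑ i ∈ S, x i ≤ psum w #S := by
  refine convexHull_min ?_ (convex_halfSpace_le (isLinearMap_sum_apply S) _) hx
  rintro _ ⟨σ, rfl⟩
  simpa [sum_map, psum] using sum_le_sum_ite_lt_card hw (S.map σ.toEmbedding)

theorem sum_eq_of_mem_permutahedron {w x : Fin n → ℝ} (hx : x ∈ permutahedron w) :
    ∑ i, x i = ∑ i, w i := by
  refine convexHull_min ?_ (convex_hyperplane (isLinearMap_sum_apply univ) _) hx
  rintro _ ⟨σ, rfl⟩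
  exact Equiv.sum_comp σ w

lemma psum_comp_castSucc (d : Fin (n + 1) → ℝ) (t : ℕ) :
    psum (fun i => d i.castSucc) t = psum d (min t n) := by
  simp [psum, Fin.sum_univ_castSucc]

lemma psum_sub (x y : Fin n → ℝ) (t : ℕ) : psum (y - x) t = psum y t - psum x t := by
  simp only [psum, ← sum_sub_distrib]
  exact sum_congr rfl fun i _ => by split_ifs <;> simp

lemma psum_of_le {x : Fin n → ℝ} {t : ℕ} (ht : n ≤ t) : psum x t = ∑ i, x i :=
  sum_congr rfl fun i _ => if_pos (i.2.trans_le ht)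

lemma sum_mul_nonneg_of_antitone {c d : Fin n → ℝ} (hc : Antitone c) (hc0 : ∀ i, 0 ≤ c i)
    (hd : ∀ t, 0 ≤ psum d t) : 0 ≤ ∑ i, c i * d i := by
  induction n with
  | zero => simp
  | succ n ih =>
    have hsplit : ∑ i, c i * d i = ∑ i : Fin n, (c i.castSucc - c (Fin.last n)) * d i.castSucc
        + c (Fin.last n) * psum d (n + 1) := by
      rw [psum_of_le le_rfl, Fin.sum_univ_castSucc (fun i => d i)]
      simp only [Fin.sum_univ_castSucc, sub_mul, sum_sub_distrib, mul_add, mul_sum]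
      ring
    rw [hsplit]
    refine add_nonneg (ih (fun i j h => sub_le_sub_right (hc (Fin.castSucc_le_castSucc_iff.2 h)) _)
      (fun i => sub_nonneg.2 (hc (Fin.le_last _))) fun t => ?_) (mul_nonneg (hc0 _) (hd _))
    rw [psum_comp_castSucc]
    exact hd _

theorem sum_mul_le_sum_mul_of_psum_le {c x y : Fin n → ℝ} (hc : Antitone c)
    (h : ∀ t, psum x t ≤ psum y t) (hsum : ∑ i, x i = ∑ i, y i) :
    ∑ i, c i * x i ≤ ∑ i, c i * y i := by
  cases n with
  | zero => simp
  | succ n =>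
    have := sum_mul_nonneg_of_antitone (c := fun i => c i - c (Fin.last n)) (d := y - x)
      (fun i j h => sub_le_sub_right (hc h) _) (fun i => sub_nonneg.2 (hc (Fin.le_last _)))
      (fun t => by rw [psum_sub]; exact sub_nonneg.2 (h t))
    simp only [Pi.sub_apply, sub_mul, mul_sub, sum_sub_distrib, ← mul_sum, hsum] at this
    linarith

lemma psum_card_filter_lt (w : Fin n → ℝ) (t : ℕ) :
    psum w #{i : Fin n | (i : ℕ) < t} = psum w t := by
  simp [psum, Fin.card_filter_val_lt]

theorem mem_permutahedron_of_sum_le_psum {w x : Fin n → ℝ}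
    (hx : ∀ S : Finset (Fin n), ∑ i ∈ S, x i ≤ psum w #S) (hsum : ∑ i, x i = ∑ i, w i) :
    x ∈ permutahedron w := by
  have hclosed : IsClosed (permutahedron w) :=
    ((Set.finite_range fun σ : Equiv.Perm (Fin n) => w ∘ σ).subset
      (by rintro _ ⟨σ, rfl⟩; exact ⟨σ, rfl⟩)).isClosed_convexHull (𝕜 := ℝ)
  by_contra hxP
  obtain ⟨f, u, hfP, hfx⟩ :=
    geometric_hahn_banach_closed_point (convex_convexHull ℝ _) hclosed hxP
  set c : Fin n → ℝ := fun i => f fun j => if i = j then 1 else 0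
  have hf : ∀ y, f y = ∑ i, c i * y i := fun y => by
    simpa [mul_comm] using f.toLinearMap.pi_apply_eq_sum_univ y
  set ρ := Tuple.sort fun i => -c i
  have hρ : Antitone (c ∘ ρ) := fun i j h =>
    neg_le_neg_iff.1 (Tuple.monotone_sort (fun i => -c i) h)
  -- prefix sums of `x ∘ ρ` are subset sums of `x`
  have key : ∑ j, c (ρ j) * x (ρ j) ≤ ∑ j, c (ρ j) * w j := by
    refine sum_mul_le_sum_mul_of_psum_le hρ (fun t => ?_) (by rw [Equiv.sum_comp ρ x, hsum])
    rw [← psum_card_filter_lt w t, psum, ← sum_filter]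
    simpa [sum_map] using hx ((univ.filter fun i : Fin n => (i : ℕ) < t).map ρ.toEmbedding)
  have hfw : f x ≤ f (w ∘ ρ.symm) := by
    rw [hf, hf, ← Equiv.sum_comp ρ, ← Equiv.sum_comp ρ (fun i => c i * (w ∘ ρ.symm) i)]
    simpa using key
  linarith [hfP _ (subset_convexHull ℝ _ ⟨ρ.symm, rfl⟩)]

theorem mem_permutahedron_iff {w x : Fin n → ℝ} (hw : Antitone w) :
    x ∈ permutahedron w ↔
      (∀ S : Finset (Fin n), ∑ i ∈ S, x i ≤ psum w #S) ∧ ∑ i, x i = ∑ i, w i :=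
  ⟨fun hx => ⟨sum_le_psum_of_mem_permutahedron hw hx, sum_eq_of_mem_permutahedron hx⟩,
    fun h => mem_permutahedron_of_sum_le_psum h.1 h.2⟩

end Permutahedron

section Dominance

variable {n : ℕ}

/-- Dominance of a weight `β` by `μ`, quantified over all sets of coordinates so that `β` need
not be sorted. -/
def Dominates (μ β : Fin n → ℕ) : Prop :=
  (∀ S : Finset (Fin n), ∑ i ∈ S, β i ≤ npsum μ #S) ∧ ∑ i, β i = ∑ i, μ i

theorem Dominates.mono {μ ν β : Fin n → ℕ} (h : Dominates μ β)
    (hle : ∀ t, npsum μ t ≤ npsum ν t) (hsum : ∑ i, ν i = ∑ i, μ i) : Dominates ν β :=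
  ⟨fun S => (h.1 S).trans (hle _), h.2.trans hsum.symm⟩

lemma psum_natCast (μ : Fin n → ℕ) (t : ℕ) : psum (fun i => (μ i : ℝ)) t = npsum μ t := by
  simp only [psum, npsum, Nat.cast_sum, Nat.cast_ite, Nat.cast_zero]

theorem natCast_mem_permutahedron_iff {μ β : Fin n → ℕ} (hμ : Antitone μ) :
    (fun i => (β i : ℝ)) ∈ permutahedron (fun i => (μ i : ℝ)) ↔ Dominates μ β := by
  rw [mem_permutahedron_iff fun i j h => Nat.cast_le.2 (hμ h)]
  simp only [psum_natCast, Dominates]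
  norm_cast

end Dominance

section Diagram

variable {n : ℕ}

def diagram (μ : Fin n → ℕ) : Finset (Fin n × ℕ) :=
  {p ∈ univ ×ˢ range (∑ i, μ i) | p.2 < μ p.1}

lemma mem_diagram {μ : Fin n → ℕ} {p : Fin n × ℕ} : p ∈ diagram μ ↔ p.2 < μ p.1 := by
  simp only [diagram, mem_filter, mem_product, mem_univ, mem_range, true_and, and_iff_right_iff_imp]
  exact fun h => h.trans_le (single_le_sum_of_canonicallyOrdered (f := μ) (mem_univ p.1))

lemma sum_diagram_eq_sum_rows {M : Type*} [AddCommMonoid M] (μ : Fin n → ℕ) (f : Fin n × ℕ → M) :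
    ∑ p ∈ diagram μ, f p = ∑ r, ∑ c ∈ range (μ r), f (r, c) := by
  rw [diagram, sum_filter, sum_product]
  refine sum_congr rfl fun r _ => ?_
  rw [← sum_filter]
  congr 1
  ext c
  simp only [mem_filter, mem_range, and_iff_right_iff_imp]
  exact fun h => h.trans_le (single_le_sum_of_canonicallyOrdered (f := μ) (mem_univ r))

lemma sum_diagram_eq_sum_cols {M : Type*} [AddCommMonoid M] (μ : Fin n → ℕ) (f : Fin n × ℕ → M) :
    ∑ p ∈ diagram μ, f p = ∑ c ∈ range (∑ i, μ i), ∑ r with c < μ r, f (r, c) := by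
  rw [diagram, sum_filter, sum_product_right]
  exact sum_congr rfl fun c _ => (sum_filter _ _).symm

lemma npsum_eq_card_diagram (μ : Fin n → ℕ) (t : ℕ) :
    npsum μ t = #{p ∈ diagram μ | (p.1 : ℕ) < t} := by
  rw [card_filter, sum_diagram_eq_sum_rows, npsum]
  refine sum_congr rfl fun r _ => ?_
  split_ifs <;> simp

noncomputable def tableauWeight (μ : Fin n → ℕ) (T : Fin n → ℕ → ℕ) (i : Fin n) : ℕ :=
  Set.ncard {p : Fin n × ℕ | p.2 < μ p.1 ∧ T p.1 p.2 = (i : ℕ) + 1}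

lemma tableauWeight_eq_card (μ : Fin n → ℕ) (T : Fin n → ℕ → ℕ) (i : Fin n) :
    tableauWeight μ T i = #{p ∈ diagram μ | T p.1 p.2 = (i : ℕ) + 1} := by
  rw [tableauWeight, ← Set.ncard_coe_finset]
  congr 1
  ext p
  simp [mem_diagram]

lemma sum_tableauWeight_eq (μ : Fin n → ℕ) (T : Fin n → ℕ → ℕ) (S : Finset (Fin n)) :
    ∑ i ∈ S, tableauWeight μ T i = ∑ p ∈ diagram μ, #{i ∈ S | T p.1 p.2 = i.val + 1} := by
  simp_rw [tableauWeight_eq_card]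
  exact sum_card_bipartiteAbove_eq_sum_card_bipartiteBelow _

end Diagram

section KostkaNecessity

variable {n : ℕ} {μ : Fin n → ℕ} {T : Fin n → ℕ → ℕ}

lemma card_entry_le_one (r : Fin n) (c : ℕ) (S : Finset (Fin n)) :
    #{i ∈ S | T r c = i.val + 1} ≤ 1 :=
  card_le_one.2 fun i hi j hj => Fin.ext (by simp only [mem_filter] at hi hj; omega)

lemma card_entry_eq_one (hT : IsSSYT μ T) {r : Fin n} {c : ℕ} (hc : c < μ r) :
    #{i : Fin n | T r c = i.val + 1} = 1 := by
  obtain ⟨h1, h2⟩ := hT.1 r c hc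
  refine card_eq_one.2 ⟨⟨T r c - 1, by omega⟩, ?_⟩
  ext i
  simp only [mem_filter, mem_univ, true_and, mem_singleton, Fin.ext_iff]
  omega

theorem sum_tableauWeight (hT : IsSSYT μ T) : ∑ i, tableauWeight μ T i = ∑ i, μ i := by
  rw [sum_tableauWeight_eq, sum_diagram_eq_sum_rows]
  refine sum_congr rfl fun r _ => ?_
  rw [sum_congr rfl fun c hc => card_entry_eq_one hT (mem_range.1 hc)]
  simp

/-- A column has distinct entries, so at most `#S` of its cells hold entries from `S`; and since
`μ` is a partition, its rows form an initial segment, so `min #S (column length)` is the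
right-hand side. -/
lemma sum_card_entries_col_le (hμ : Antitone μ) (hT : IsSSYT μ T) (S : Finset (Fin n)) (c : ℕ) :
    ∑ r with c < μ r, #{i ∈ S | T r c = i.val + 1} ≤ #{r ∈ {r | c < μ r} | r.val < #S} := by
  set D : Finset (Fin n) := {r | c < μ r}
  have hD : ∀ r : Fin n, (r : ℕ) < #D ↔ c < μ r :=
    fun r => Fin.lt_card_filter_univ_iff_apply_of_imp _ fun i j hji hi => hi.trans_le (hμ hji)
  have hcard : #{r ∈ D | r.val < #S} = min #D #S := by
    have hDn : #D ≤ n := by simpa using card_le_univ D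
    have hmem : ∀ r, r ∈ D ↔ (r : ℕ) < #D := fun r => by rw [hD]; simp [D]
    have : D.filter (fun r => r.val < #S) = univ.filter fun r : Fin n => r.val < min #D #S := by
      ext r
      simp only [mem_filter, mem_univ, true_and, lt_min_iff, hmem]
    rw [this, Fin.card_filter_val_lt]
    omega
  rw [hcard]
  refine le_min ((sum_le_sum fun r _ => card_entry_le_one r c S).trans (by simp)) ?_
  refine (sum_card_bipartiteAbove_eq_sum_card_bipartiteBelow
    (fun r (i : Fin n) => T r c = i.val + 1)).trans_le ?_
  refine (sum_le_sum fun i _ => card_le_one.2 fun r hr r' hr' => ?_).trans (by simp)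
  simp only [bipartiteBelow, mem_filter, D, mem_univ, true_and] at hr hr'
  rcases lt_trichotomy r r' with h | h | h
  · exact absurd (hT.2.2 r r' h c hr'.1 hr.1) (by omega)
  · exact h
  · exact absurd (hT.2.2 r' r h c hr.1 hr'.1) (by omega)

theorem sum_tableauWeight_le (hμ : Antitone μ) (hT : IsSSYT μ T) (S : Finset (Fin n)) :
    ∑ i ∈ S, tableauWeight μ T i ≤ npsum μ #S := by
  rw [sum_tableauWeight_eq, sum_diagram_eq_sum_cols, npsum_eq_card_diagram, card_filter,
    sum_diagram_eq_sum_cols]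
  refine sum_le_sum fun c _ => (sum_card_entries_col_le hμ hT S c).trans_eq ?_
  rw [card_filter]

theorem dominates_tableauWeight (hμ : Antitone μ) (hT : IsSSYT μ T) :
    Dominates μ (tableauWeight μ T) :=
  ⟨sum_tableauWeight_le hμ hT, sum_tableauWeight hT⟩

end KostkaNecessity

section StripRemoval

variable {n : ℕ} {m : Fin n → ℕ}

def rowLen (m : Fin n → ℕ) (r : ℕ) : ℕ := if h : r < n then m ⟨r, h⟩ else 0

@[simp]
lemma rowLen_val (m : Fin n → ℕ) (r : Fin n) : rowLen m r = m r := by simp [rowLen]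

lemma antitone_rowLen (hm : Antitone m) : Antitone (rowLen m) := by
  intro s t hst
  unfold rowLen
  split_ifs with ht hs hs
  · exact hm (Fin.le_def.2 hst)
  · omega
  · exact Nat.zero_le _
  · exact le_rfl

@[simp]
lemma npsum_zero (m : Fin n → ℕ) : npsum m 0 = 0 := by simp [npsum]

lemma npsum_succ (m : Fin n → ℕ) (t : ℕ) : npsum m (t + 1) = npsum m t + rowLen m t := by
  by_cases ht : t < n
  · rw [npsum, npsum, sum_ite_lt_succ m ht, rowLen, dif_pos ht]
  · rw [rowLen, dif_neg ht, add_zero]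
    exact sum_congr rfl fun i _ => by rw [if_pos (by omega), if_pos (by omega)]

lemma npsum_of_le (m : Fin n → ℕ) {t : ℕ} (ht : n ≤ t) : npsum m t = ∑ i, m i :=
  sum_congr rfl fun i _ => if_pos (i.2.trans_le ht)

lemma npsum_mono (m : Fin n → ℕ) : Monotone (npsum m) := fun s t hst =>
  sum_le_sum fun i _ => by split_ifs <;> omega

/-- `m` with the bottom cell of each of its first `a` columns removed: row `r` loses the cells
in the columns `[m (r + 1), m r) ∩ [0, a)`. -/
def removeStrip (m : Fin n → ℕ) (a : ℕ) (r : Fin n) : ℕ :=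
  m r - (min a (m r) - min a (rowLen m (r.val + 1)))

lemma removeStrip_le (m : Fin n → ℕ) (a : ℕ) (r : Fin n) : removeStrip m a r ≤ m r :=
  Nat.sub_le _ _

lemma le_removeStrip_of_lt (hm : Antitone m) (a : ℕ) {r r' : Fin n} (h : r < r') :
    m r' ≤ removeStrip m a r := by
  have h1 : m r' ≤ rowLen m (r.val + 1) := by
    rw [← rowLen_val m r']; exact antitone_rowLen hm (Fin.lt_def.1 h)
  have h2 : rowLen m (r.val + 1) ≤ m r := by
    rw [← rowLen_val m r]; exact antitone_rowLen hm (Nat.le_succ _)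
  unfold removeStrip
  omega

lemma rowLen_removeStrip (m : Fin n → ℕ) (a t : ℕ) :
    rowLen (removeStrip m a) t = rowLen m t - (min a (rowLen m t) - min a (rowLen m (t + 1))) := by
  unfold removeStrip
  by_cases ht : t < n <;> simp [rowLen, ht]

lemma npsum_removeStrip (hm : Antitone m) {a : ℕ} (ha : a ≤ rowLen m 0) (t : ℕ) :
    npsum (removeStrip m a) t + (a - min a (rowLen m t)) = npsum m t := by
  induction t with
  | zero => simp [ha]
  | succ t ih =>
    have := antitone_rowLen hm (Nat.le_add_right t 1)
    rw [npsum_succ, npsum_succ, rowLen_removeStrip]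
    omega

lemma sum_removeStrip (hm : Antitone m) {a : ℕ} (ha : a ≤ rowLen m 0) :
    ∑ i, removeStrip m a i + a = ∑ i, m i := by
  have := npsum_removeStrip hm ha n
  rwa [npsum_of_le _ le_rfl, npsum_of_le _ le_rfl, rowLen, dif_neg (lt_irrefl n), _root_.min_zero,
    Nat.sub_zero] at this

lemma le_rowLen_zero_of_dominates {α : Fin n → ℕ} (hdom : Dominates m α) (k : Fin n) :
    α k ≤ rowLen m 0 := by
  have h := hdom.1 {k}
  rwa [sum_singleton, card_singleton, ← zero_add 1, npsum_succ, npsum_zero, zero_add] at h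

theorem dominates_removeStrip {α : Fin n → ℕ} (hm : Antitone m) (hdom : Dominates m α)
    (k : Fin n) : Dominates (removeStrip m (α k)) (Function.update α k 0) := by
  have ha := le_rowLen_zero_of_dominates hdom k
  have hupdate : ∀ S : Finset (Fin n), ∑ i ∈ S, Function.update α k 0 i = ∑ i ∈ S.erase k, α i :=
    fun S => by
      rw [← sum_erase S (Function.update_self k 0 α)]
      exact sum_congr rfl fun i hi => Function.update_of_ne (ne_of_mem_erase hi) _ _
  refine ⟨fun S => ?_, ?_⟩
  · have hkS : k ∉ S.erase k := notMem_erase k S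
    have hins := hdom.1 (insert k (S.erase k))
    rw [sum_insert hkS, card_insert_of_notMem hkS, npsum_succ] at hins
    have := hdom.1 (S.erase k)
    have := npsum_removeStrip hm ha #(S.erase k)
    rw [hupdate]
    refine le_trans ?_ (npsum_mono _ (card_erase_le (a := k)))
    omega
  · obtain ⟨-, hsum⟩ := hdom
    have := sum_removeStrip hm ha
    rw [← add_sum_erase univ α (mem_univ k)] at hsum
    rw [hupdate univ]
    omega

end StripRemoval

section KostkaSufficiency

variable {n : ℕ} {ν m : Fin n → ℕ} {T : Fin n → ℕ → ℕ} {k : ℕ}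

def fillStrip (ν m : Fin n → ℕ) (T : Fin n → ℕ → ℕ) (v : ℕ) : Fin n → ℕ → ℕ :=
  fun r c => if c < ν r then T r c else if c < m r then v else 0

lemma isSSYT_fillStrip (hνm : ∀ r, ν r ≤ m r) (hstrip : ∀ r r', r < r' → m r' ≤ ν r)
    (hT : IsSSYT ν T) (hTk : ∀ r c, c < ν r → T r c ≤ k) (hk : k < n) :
    IsSSYT m (fillStrip ν m T (k + 1)) := by
  refine ⟨fun r c hc => ?_, fun r c c' hcc' hc' => ?_, fun r r' hrr' c hc' hc => ?_⟩
  · unfold fillStrip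
    split_ifs with h
    · exact hT.1 r c h
    · omega
  · unfold fillStrip
    split_ifs with h1 h2 h2 <;>
      first | omega | exact hT.2.1 r c c' hcc' h2 | (have := hTk r c h1; omega)
  · have := hνm r'
    have := hstrip r r' hrr'
    unfold fillStrip
    split_ifs with h1 h2 <;>
      first | omega | exact hT.2.2 r r' hrr' c h2 h1 | (have := hTk r c h1; omega)

lemma tableauWeight_fillStrip_of_ne (hνm : ∀ r, ν r ≤ m r)
    (hTk : ∀ r c, c < ν r → T r c ≤ k) {i : Fin n} (hi : (i : ℕ) ≠ k) :
    tableauWeight m (fillStrip ν m T (k + 1)) i = tableauWeight ν T i := by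
  unfold tableauWeight
  congr 1
  ext ⟨r, c⟩
  have := hνm r
  have := hTk r c
  simp only [Set.mem_ofPred_eq, fillStrip]
  split_ifs <;> omega

lemma tableauWeight_fillStrip_add (hνm : ∀ r, ν r ≤ m r)
    (hTk : ∀ r c, c < ν r → T r c ≤ k) {i : Fin n} (hi : (i : ℕ) = k) :
    tableauWeight m (fillStrip ν m T (k + 1)) i + ∑ r, ν r = ∑ r, m r := by
  have hcells : tableauWeight m (fillStrip ν m T (k + 1)) i = ∑ r, (m r - ν r) := by
    rw [tableauWeight_eq_card, card_filter, sum_diagram_eq_sum_rows]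
    refine sum_congr rfl fun r _ => ?_
    rw [← card_filter, ← Nat.card_Ico]
    congr 1
    ext c
    have := hTk r c
    simp only [mem_filter, mem_range, mem_Ico, fillStrip]
    split_ifs <;> omega
  rw [hcells, ← sum_add_distrib]
  exact sum_congr rfl fun r _ => Nat.sub_add_cancel (hνm r)

/-- Induct on `k`: the cells holding the largest entry `k + 1` are the bottom cells of the first
`α k` columns. -/
theorem exists_ssyt_entries_le_of_dominates (k : ℕ) (hk : k ≤ n) {m α : Fin n → ℕ}
    (hm : Antitone m) (hdom : Dominates m α) (hα : ∀ i : Fin n, k ≤ (i : ℕ) → α i = 0) :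
    ∃ T, IsSSYT m T ∧ (∀ r c, m r ≤ c → T r c = 0) ∧ (∀ r c, c < m r → T r c ≤ k) ∧
      tableauWeight m T = α := by
  induction k generalizing m α with
  | zero =>
    have hm0 : ∀ r, m r = 0 := by
      have : ∑ i, m i = 0 := by rw [← hdom.2]; exact sum_eq_zero fun i _ => hα i (Nat.zero_le _)
      exact fun r => sum_eq_zero_iff.1 this r (mem_univ r)
    refine ⟨fun _ _ => 0, ⟨fun r c hc => ?_, fun r c c' _ hc => ?_, fun r r' _ c hc => ?_⟩,
      fun _ _ _ => rfl, fun _ _ _ => le_rfl, funext fun i => ?_⟩ <;> simp_all [tableauWeight]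
  | succ k ih =>
    set K : Fin n := ⟨k, hk⟩
    set ν := removeStrip m (α K)
    have hνm : ∀ r, ν r ≤ m r := removeStrip_le m _
    have hstrip : ∀ r r', r < r' → m r' ≤ ν r := fun r r' h => le_removeStrip_of_lt hm _ h
    have hν : Antitone ν := fun r r' h => h.eq_or_lt.elim (fun h => h ▸ le_rfl)
      fun h => (hνm r').trans (hstrip r r' h)
    obtain ⟨T, hT, hT0, hTk, hTw⟩ := ih (by omega) hν (dominates_removeStrip hm hdom K)
      fun i hi => by
        rcases eq_or_ne i K with rfl | hiK
        · exact Function.update_self _ _ _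
        · rw [Function.update_of_ne hiK]
          exact hα i (by have : (i : ℕ) ≠ k := fun h => hiK (Fin.ext h); omega)
    refine ⟨fillStrip ν m T (k + 1), isSSYT_fillStrip hνm hstrip hT hTk hk, fun r c hc => ?_,
      fun r c hc => ?_, funext fun i => ?_⟩
    · have := hνm r
      simp only [fillStrip]
      rw [if_neg (by omega), if_neg (by omega)]
    · have := hTk r c
      simp only [fillStrip]
      split_ifs <;> omega
    · by_cases hi : (i : ℕ) = k
      · obtain rfl : i = K := Fin.ext hi
        have h1 := tableauWeight_fillStrip_add hνm hTk hi
        have h2 : ∑ r, ν r + α K = ∑ r, m r :=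
          sum_removeStrip hm (le_rowLen_zero_of_dominates hdom K)
        omega
      · rw [tableauWeight_fillStrip_of_ne hνm hTk hi, hTw,
          Function.update_of_ne fun h => hi (congrArg Fin.val h)]

lemma finite_ssyt (μ : Fin n → ℕ) (P : (Fin n → ℕ → ℕ) → Prop) :
    {T | IsSSYT μ T ∧ (∀ r c, μ r ≤ c → T r c = 0) ∧ P T}.Finite := by
  refine Set.Finite.of_finite_image (f := fun T (p : Fin n × Fin (∑ i, μ i)) => T p.1 p.2)
    ((Set.Finite.pi' fun _ => Set.finite_Iic n).subset ?_) ?_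
  · rintro _ ⟨T, ⟨hT, hT0, -⟩, rfl⟩ p
    by_cases hc : (p.2 : ℕ) < μ p.1
    · exact (hT.1 _ _ hc).2
    · simp [hT0 p.1 p.2 (not_lt.1 hc)]
  · rintro T ⟨-, hT0, -⟩ T' ⟨-, hT0', -⟩ h
    funext r c
    by_cases hc : c < ∑ i, μ i
    · exact congrFun h (r, ⟨c, hc⟩)
    · have := single_le_sum_of_canonicallyOrdered (f := μ) (mem_univ r)
      rw [hT0 r c (by omega), hT0' r c (by omega)]

theorem kostka_ne_zero_iff {μ : Fin n → ℕ} (hμ : Antitone μ) (β : Fin n →₀ ℕ) :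
    kostka μ β ≠ 0 ↔ Dominates μ β := by
  rw [kostka, ← Nat.pos_iff_ne_zero, Set.ncard_pos (finite_ssyt μ _)]
  constructor
  · rintro ⟨T, hT, -, hw⟩
    rw [show ⇑β = tableauWeight μ T from funext hw]
    exact dominates_tableauWeight hμ hT
  · intro h
    obtain ⟨T, hT, hT0, -, hw⟩ :=
      exists_ssyt_entries_le_of_dominates n le_rfl hμ h fun i hi => absurd i.2 (by omega)
    exact ⟨T, hT, hT0, fun i => (congrFun hw i).symm⟩

theorem sum_eq_of_kostka_ne_zero {μ : Fin n → ℕ} {β : Fin n →₀ ℕ} (h : kostka μ β ≠ 0) :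
    ∑ i, β i = ∑ i, μ i := by
  obtain ⟨T, hT, -, hw⟩ := Set.nonempty_of_ncard_ne_zero h
  rw [← sum_tableauWeight hT]
  exact sum_congr rfl fun i _ => hw i

end KostkaSufficiency

section Grothendieck

open MvPolynomial

variable {n : ℕ}

lemma grothCoeff_ne_zero_iff {lam μ : Fin n → ℕ} :
    grothCoeff lam μ ≠ 0 ↔ (Antitone μ ∧ ∀ i, lam i ≤ μ i) ∧ flaggedCount lam μ ≠ 0 := by
  unfold grothCoeff
  split_ifs with h <;> simp [h]

/-- Row `r` of a flagged tableau holds `μ r - lam r` distinct entries from `{1, …, r}`. -/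
lemma le_add_of_flaggedCount_ne_zero {lam μ : Fin n → ℕ} (h : flaggedCount lam μ ≠ 0)
    (r : Fin n) : μ r ≤ lam r + r := by
  obtain ⟨T, hT, -⟩ := Set.nonempty_of_ncard_ne_zero h
  have hmono : StrictMonoOn (T r) (Ico (lam r) (μ r) : Set ℕ) := fun c hc c' hc' hcc' => by
    simp only [coe_Ico, Set.mem_Ico] at hc hc'
    exact hT.2.2.1 r c c' hc.1 hcc' hc'.2
  have hcard : #(Ico (lam r) (μ r)) ≤ #(Icc 1 (r : ℕ)) :=
    card_le_card_of_injOn (T r) (fun c hc => by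
      simp only [coe_Ico, Set.mem_Ico, coe_Icc, Set.mem_Icc] at hc ⊢
      exact hT.2.1 r c hc.1 hc.2) hmono.injOn
  simp only [Nat.card_Ico, Nat.card_Icc, add_tsub_cancel_right] at hcard
  have := hT.1 r
  omega

lemma coeff_schur (μ : Fin n → ℕ) (β : Fin n →₀ ℕ) : coeff β (schur μ) = kostka μ β := by
  rw [schur, coeff_sum]
  simp only [coeff_smul, coeff_monomial, smul_eq_mul, mul_ite, mul_one, mul_zero]
  rw [sum_ite_eq']
  split_ifs with h
  · rfl
  · by_contra hK
    refine h (mem_Iic.2 fun i => ?_)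
    rw [← sum_eq_of_kostka_ne_zero (Nat.cast_ne_zero.1 (Ne.symm hK))]
    exact single_le_sum_of_canonicallyOrdered (f := ⇑β) (mem_univ i)

/-- All nonzero terms of the Schur expansion of a coefficient of `G_lam` have the same sign. -/
lemma grothCoeff_mul_kostka (lam μ : Fin n → ℕ) (β : Fin n →₀ ℕ) :
    grothCoeff lam μ * kostka μ β
      = (-1) ^ (∑ i, β i - ∑ i, lam i) * (|grothCoeff lam μ| * kostka μ β) := by
  by_cases hK : kostka μ β = 0
  · simp [hK]
  rw [sum_eq_of_kostka_ne_zero hK, grothCoeff]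
  split_ifs <;> simp [abs_mul, mul_assoc]

theorem coeff_grothendieck_ne_zero_iff (lam : Fin n → ℕ) (β : Fin n →₀ ℕ) :
    coeff β (grothendieck lam) ≠ 0 ↔ ∃ μ, grothCoeff lam μ ≠ 0 ∧ kostka μ β ≠ 0 := by
  simp only [grothendieck, coeff_sum, coeff_smul, coeff_schur, smul_eq_mul, grothCoeff_mul_kostka,
    ← mul_sum]
  rw [mul_ne_zero_iff, and_iff_right (pow_ne_zero _ (by norm_num)), Ne,
    sum_eq_zero_iff_of_nonneg fun _ _ => by positivity]
  push Not
  simp only [ne_eq, mul_eq_zero, abs_eq_zero, Nat.cast_eq_zero, not_or]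
  constructor
  · rintro ⟨m, -, h⟩
    exact ⟨m, h⟩
  · rintro ⟨μ, hg, hK⟩
    refine ⟨Finsupp.equivFunOnFinite.symm μ, mem_Iic.2 fun i => ?_, hg, hK⟩
    exact le_add_of_flaggedCount_ne_zero (grothCoeff_ne_zero_iff.1 hg).2 i

theorem coeff_homogeneousComponent_grothendieck_ne_zero_iff (lam : Fin n → ℕ) (s : ℕ)
    (β : Fin n →₀ ℕ) :
    coeff β (homogeneousComponent s (grothendieck lam)) ≠ 0 ↔
      ∑ i, β i = s ∧ ∃ μ, grothCoeff lam μ ≠ 0 ∧ kostka μ β ≠ 0 := by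
  rw [coeff_homogeneousComponent, Finsupp.degree_eq_sum, ← coeff_grothendieck_ne_zero_iff]
  split_ifs with h <;> simp [h]

theorem newton_eq_permutahedron {μ : Fin n → ℕ} {f : MvPolynomial (Fin n) ℝ}
    (hf : ∀ β : Fin n →₀ ℕ,
      coeff β f ≠ 0 ↔ (fun i => (β i : ℝ)) ∈ permutahedron fun i => (μ i : ℝ)) :
    newton f = permutahedron fun i => (μ i : ℝ) := by
  refine (convexHull_min ?_ (convex_convexHull ℝ _)).antisymm (convexHull_mono ?_)
  · rintro _ ⟨β, hβ, rfl⟩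
    exact (hf β).1 (mem_support_iff.1 hβ)
  · rintro _ ⟨σ, rfl⟩
    exact ⟨Finsupp.equivFunOnFinite.symm (μ ∘ σ),
      mem_support_iff.2 ((hf _).2 (subset_convexHull ℝ _ ⟨σ, rfl⟩)), rfl⟩

end Grothendieck

theorem component_snp_of_dominance_max_general {n : ℕ} (lam : Fin n → ℕ)
    (k : ℕ) (mustar : Fin n → ℕ) (hstar : Antitone mustar)
    (hsize : ∑ i, mustar i = ∑ i, lam i + k)
    (hmem : grothCoeff lam mustar ≠ 0)
    (hmax : ∀ mu : Fin n → ℕ, Antitone mu → (∑ i, mu i = ∑ i, lam i + k) →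
      grothCoeff lam mu ≠ 0 → ∀ t, npsum mu t ≤ npsum mustar t) :
    newton (MvPolynomial.homogeneousComponent (∑ i, lam i + k) (grothendieck lam))
        = permutahedron (fun i => (mustar i : ℝ)) ∧
      SNP (MvPolynomial.homogeneousComponent (∑ i, lam i + k) (grothendieck lam)) := by
  have hsupp : ∀ β : Fin n →₀ ℕ,
      MvPolynomial.coeff β (MvPolynomial.homogeneousComponent (∑ i, lam i + k) (grothendieck lam))
        ≠ 0 ↔ (fun i => (β i : ℝ)) ∈ permutahedron fun i => (mustar i : ℝ) := by
    intro β
    rw [coeff_homogeneousComponent_grothendieck_ne_zero_iff, natCast_mem_permutahedron_iff hstar]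
    constructor
    · rintro ⟨hβ, μ, hg, hK⟩
      have hμ := (grothCoeff_ne_zero_iff.1 hg).1.1
      have hdom := (kostka_ne_zero_iff hμ β).1 hK
      exact hdom.mono (hmax μ hμ (hdom.2.symm.trans hβ) hg) (hsize.trans (hβ.symm.trans hdom.2))
    · intro hdom
      exact ⟨hdom.2.trans hsize, mustar, hmem, (kostka_ne_zero_iff hstar β).2 hdom⟩
  have hnewton := newton_eq_permutahedron hsupp
  exact ⟨hnewton, fun α hα => (hsupp α).2 (hnewton ▸ hα)⟩

/-- If every partition of size `s = |λ| + k` appearing with nonzero coefficient in the Schur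
expansion of the degree-`s` homogeneous component of `G_λ` is dominated by `μ*`, and `μ*`
itself appears, then the Newton polytope of that component is the permutahedron `P_{μ*}` and
the component has SNP. -/
theorem component_snp_of_dominance_max {n : ℕ} (lam : Fin n → ℕ) (hlam : Antitone lam)
    (k : ℕ) (mustar : Fin n → ℕ) (hstar : Antitone mustar)
    (hsize : ∑ i, mustar i = ∑ i, lam i + k)
    (hmem : grothCoeff lam mustar ≠ 0)
    (hmax : ∀ mu : Fin n → ℕ, Antitone mu → (∑ i, mu i = ∑ i, lam i + k) →
      grothCoeff lam mu ≠ 0 → ∀ t, npsum mu t ≤ npsum mustar t) :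
    newton (MvPolynomial.homogeneousComponent (∑ i, lam i + k) (grothendieck lam))
        = permutahedron (fun i => (mustar i : ℝ)) ∧
      SNP (MvPolynomial.homogeneousComponent (∑ i, lam i + k) (grothendieck lam)) :=
  component_snp_of_dominance_max_general lam k mustar hstar hsize hmem hmax
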